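/- arXiv:1910.04489 — 8 statements merged into one kernel-verified Lean document; each statement's English description precedes it below -/
import Mathlib

section
/- For any coalitions C, D ⊆ A with C ⊆ D and any real number p with 0 ≤ p ≤ 1: (1) ⊢_L ([C]_p φ → [D]_p φ) for each formula φ ∈ Φ; and (2) ⊢_{L⁺} ([C]_p φ → [D]_p φ) for each formula φ ∈ Φ⁺, provided the set C is nonempty. -/
/-- The interval [0,1] of real numbers, used for probability subscripts. -/
abbrev I01 : Type := Set.Icc (0 : ℝ) 1

/-- Formulae of the language Φ: propositional variables, ⊥, negation,
implication, and the coalition modality [C]_p φ with C ⊆ A and p ∈ [0,1]. -/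
inductive Formula (A V : Type) : Type where
  | var : V → Formula A V
  | falsum : Formula A V
  | neg : Formula A V → Formula A V
  | imp : Formula A V → Formula A V → Formula A V
  | mod : Set A → I01 → Formula A V → Formula A V

/-- The constant ⊤, defined in the standard way. -/
def Formula.top {A V : Type} : Formula A V := Formula.neg Formula.falsum

/-- Propositional tautologies: true under every Boolean valuation of formulae
that respects ¬, → and ⊥ (treating variables and modal formulae as atoms). -/
def Tautology {A V : Type} (φ : Formula A V) : Prop :=
  ∀ f : Formula A V → Bool,
    (∀ ψ, f (Formula.neg ψ) = !(f ψ)) →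
    (∀ ψ χ, f (Formula.imp ψ χ) = (!(f ψ) || f χ)) →
    f Formula.falsum = false →
    f φ = true

noncomputable def iZero : I01 := ⟨0, by norm_num⟩
noncomputable def iOne : I01 := ⟨1, by norm_num⟩

/-- The sublanguage Φ⁺: every modality has a nonempty coalition. -/
inductive Formula.InPlus {A V : Type} : Formula A V → Prop where
  | var (v : V) : Formula.InPlus (Formula.var v)
  | falsum : Formula.InPlus Formula.falsum
  | neg {φ} : Formula.InPlus φ → Formula.InPlus (Formula.neg φ)
  | imp {φ ψ} : Formula.InPlus φ → Formula.InPlus ψ →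
      Formula.InPlus (Formula.imp φ ψ)
  | mod {C : Set A} (p : I01) {φ} : C.Nonempty → Formula.InPlus φ →
      Formula.InPlus (Formula.mod C p φ)

/-- Theorems of the logical system L (language Φ). -/
inductive LProof {A V : Type} : Formula A V → Prop where
  | taut {φ : Formula A V} : Tautology φ → LProof φ
  | coop (C₁ C₂ : Set A) (p q : I01) (φ ψ : Formula A V) :
      C₁ ∩ C₂ = ∅ →
      LProof (Formula.imp (Formula.mod C₁ p (Formula.imp φ ψ))
        (Formula.imp (Formula.mod C₂ q φ) (Formula.mod (C₁ ∪ C₂) (max p q) ψ)))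
  | mono (C : Set A) (p q : I01) (φ : Formula A V) : q ≤ p →
      LProof (Formula.imp (Formula.mod C p φ) (Formula.mod C q φ))
  | unach (C : Set A) (p : I01) : (0 : ℝ) < (p : ℝ) →
      LProof (Formula.neg (Formula.mod C p Formula.falsum))
  | mp {φ ψ : Formula A V} : LProof (Formula.imp φ ψ) → LProof φ → LProof ψ
  | nec (C : Set A) {φ : Formula A V} : LProof φ → LProof (Formula.mod C iZero φ)

/-- Theorems of the logical system L⁺ (language Φ⁺):
the axioms of L restricted to Φ⁺, Modus Ponens, Necessitation,
and the Monotonicity inference rule. -/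
inductive LPlusProof {A V : Type} : Formula A V → Prop where
  | taut {φ : Formula A V} : Tautology φ → Formula.InPlus φ → LPlusProof φ
  | coop (C₁ C₂ : Set A) (p q : I01) (φ ψ : Formula A V) :
      C₁.Nonempty → C₂.Nonempty → C₁ ∩ C₂ = ∅ →
      Formula.InPlus φ → Formula.InPlus ψ →
      LPlusProof (Formula.imp (Formula.mod C₁ p (Formula.imp φ ψ))
        (Formula.imp (Formula.mod C₂ q φ) (Formula.mod (C₁ ∪ C₂) (max p q) ψ)))
  | mono (C : Set A) (p q : I01) (φ : Formula A V) :
      C.Nonempty → Formula.InPlus φ → q ≤ p →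
      LPlusProof (Formula.imp (Formula.mod C p φ) (Formula.mod C q φ))
  | unach (C : Set A) (p : I01) : C.Nonempty → (0 : ℝ) < (p : ℝ) →
      LPlusProof (Formula.neg (Formula.mod C p Formula.falsum))
  | mp {φ ψ : Formula A V} : LPlusProof (Formula.imp φ ψ) → LPlusProof φ → LPlusProof ψ
  | nec (C : Set A) {φ : Formula A V} : C.Nonempty → LPlusProof φ →
      LPlusProof (Formula.mod C iZero φ)
  | monoRule (C : Set A) (p : I01) {φ ψ : Formula A V} : C.Nonempty →
      LPlusProof (Formula.imp φ ψ) →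
      LPlusProof (Formula.imp (Formula.mod C p φ) (Formula.mod C p ψ))

/-- X ⊢ φ: derivability of φ from the theorems of the system (given by the
theoremhood predicate `Pf`) together with the formulae of X, using only
the Modus Ponens inference rule. -/
inductive Deriv {A V : Type} (Pf : Formula A V → Prop) (X : Set (Formula A V)) :
    Formula A V → Prop where
  | thm {φ} : Pf φ → Deriv Pf X φ
  | ax {φ} : φ ∈ X → Deriv Pf X φ
  | mp {φ ψ} : Deriv Pf X (Formula.imp φ ψ) → Deriv Pf X φ → Deriv Pf X ψ

/-- A set X is consistent if X ⊬ ⊥. -/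
def Consistent {A V : Type} (Pf : Formula A V → Prop) (X : Set (Formula A V)) : Prop :=
  ¬ Deriv Pf X Formula.falsum

/-- A maximal consistent subset of a given language `Lang`. -/
def MaxConsistentIn {A V : Type} (Pf : Formula A V → Prop)
    (Lang : Set (Formula A V)) (X : Set (Formula A V)) : Prop :=
  X ⊆ Lang ∧ Consistent Pf X ∧
    ∀ Y : Set (Formula A V), Y ⊆ Lang → Consistent Pf Y → X ⊆ Y → Y = X

/-- A stochastic game (S, F, D, P, π). -/
structure Game (A V : Type) where
  S : Type
  F : Set S
  D : Type
  D_nonempty : Nonempty D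
  P : S → (A → D) → S → ℝ
  P_nonneg : ∀ s δ s', 0 ≤ P s δ s'
  P_le_one : ∀ s δ s', P s δ s' ≤ 1
  P_sum : ∀ s δ, HasSum (P s δ) 1
  pi : V → Set S

/-- Satisfaction s ⊩ φ, for the game with failure states F, transition
probabilities P and valuation π.  In the modal clause, δ ranges over action
profiles of the coalition C and δ' over complete action profiles extending δ. -/
def SatGen {A V S D : Type} (F : Set S) (P : S → (A → D) → S → ℝ)
    (π : V → Set S) : Formula A V → S → Prop
  | Formula.var v, s => s ∈ π v
  | Formula.falsum, _ => False
  | Formula.neg φ, s => ¬ SatGen F P π φ s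
  | Formula.imp φ ψ, s => SatGen F P π φ s → SatGen F P π ψ s
  | Formula.mod C p φ, s =>
      ∃ δ : ↥C → D, ∀ δ' : A → D, (∀ a : ↥C, δ' a.1 = δ a) →
        ((p : ℝ) ≤ ∑' t : ↥(Fᶜ), P s δ' t.1) ∧
        (∀ t : S, t ∉ F → 0 < P s δ' t → SatGen F P π φ t)

/-- Semantic entailment X ⊨ φ over all stochastic games and their
non-failure states. -/
def Entails {A V : Type} (X : Set (Formula A V)) (φ : Formula A V) : Prop :=
  ∀ (G : Game A V) (s : G.S), s ∉ G.F →
    (∀ χ ∈ X, SatGen G.F G.P G.pi χ s) → SatGen G.F G.P G.pi φ s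

/-- The subscript 1 − 10⁻ⁿ as an element of [0,1]. -/
noncomputable def oneMinusTenPow (n : ℕ) : I01 :=
  ⟨1 - (1 / 10 : ℝ) ^ n, by
    constructor
    · have h : (1 / 10 : ℝ) ^ n ≤ 1 := pow_le_one₀ (by norm_num) (by norm_num)
      linarith
    · have h : (0 : ℝ) ≤ (1 / 10 : ℝ) ^ n := by positivity
      linarith⟩

/- ## The canonical stochastic game G(Ψ,Σ) -/

/-- Σ is closed with respect to subformulae. -/
def SubfClosed {A V : Type} (Sgm : Set (Formula A V)) : Prop :=
  (∀ φ, Formula.neg φ ∈ Sgm → φ ∈ Sgm) ∧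
  (∀ φ ψ, Formula.imp φ ψ ∈ Sgm → φ ∈ Sgm ∧ ψ ∈ Sgm) ∧
  (∀ (C : Set A) (p : I01) φ, Formula.mod C p φ ∈ Sgm → φ ∈ Sgm)

/-- If σ ∈ Σ then ¬σ ∈ Σ, unless σ is itself a negation. -/
def NegClosed {A V : Type} (Sgm : Set (Formula A V)) : Prop :=
  ∀ σ ∈ Sgm, (∀ τ, σ ≠ Formula.neg τ) → Formula.neg σ ∈ Sgm

/-- Non-failure states of the canonical game: maximal consistent subsets of Σ. -/
abbrev CanState {A V : Type} (Pf : Formula A V → Prop) (Sgm : Set (Formula A V)) : Type :=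
  {s : Set (Formula A V) // MaxConsistentIn Pf Sgm s}

/-- The domain of actions of the canonical game: pairs (φ,p) with φ ∈ Σ and
p an arbitrary real number. -/
abbrev CanD {A V : Type} (Sgm : Set (Formula A V)) : Type := ↥Sgm × ℝ

/-- The set { p | [C]_p φ ∈ s and δ(a) = (φ,p) for all a ∈ C }. -/
def muSet {A V : Type} (Pf : Formula A V → Prop) (Sgm : Set (Formula A V))
    (s : CanState Pf Sgm) (δ : A → CanD Sgm) : Set ℝ :=
  {r | ∃ (C : Set A) (p : I01) (φ : Formula A V), (p : ℝ) = r ∧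
    Formula.mod C p φ ∈ s.1 ∧ ∀ a ∈ C, (δ a).1.1 = φ ∧ (δ a).2 = (p : ℝ)}

/-- μ(s,δ) = max{ p | [C]_p φ ∈ s and δ(a) = (φ,p) for all a ∈ C },
the maximum of the empty set being 0. -/
noncomputable def muCan {A V : Type} (Pf : Formula A V → Prop) (Sgm : Set (Formula A V))
    (s : CanState Pf Sgm) (δ : A → CanD Sgm) : ℝ :=
  sSup (insert 0 (muSet Pf Sgm s δ))

/-- T(s,δ): all non-failure states s' with
{ φ | [C]_p φ ∈ s and δ(a) = (φ,p) for all a ∈ C } ⊆ s'. -/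
def TCan {A V : Type} (Pf : Formula A V → Prop) (Sgm : Set (Formula A V))
    (s : CanState Pf Sgm) (δ : A → CanD Sgm) : Set (CanState Pf Sgm) :=
  {s' | ∀ φ : Formula A V,
    (∃ (C : Set A) (p : I01), Formula.mod C p φ ∈ s.1 ∧
      ∀ a ∈ C, (δ a).1.1 = φ ∧ (δ a).2 = (p : ℝ)) → φ ∈ s'.1}

-- The transition probabilities of the canonical game; `none` is the failure state f.
open Classical in
noncomputable def PCan {A V : Type} (Pf : Formula A V → Prop) (Sgm : Set (Formula A V))
    (s : Option (CanState Pf Sgm)) (δ : A → CanD Sgm)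
    (s' : Option (CanState Pf Sgm)) : ℝ :=
  match s, s' with
  | none, none => 1
  | none, some _ => 0
  | some t, none => 1 - muCan Pf Sgm t δ
  | some t, some t' =>
      if t' ∈ TCan Pf Sgm t δ then muCan Pf Sgm t δ / (TCan Pf Sgm t δ).ncard else 0

/-- The valuation of the canonical game: π(v) = { s ∈ F̄ | v ∈ s }. -/
def piCan {A V : Type} (Pf : Formula A V → Prop) (Sgm : Set (Formula A V))
    (v : V) : Set (Option (CanState Pf Sgm)) :=
  {x | ∃ t : CanState Pf Sgm, x = some t ∧ Formula.var v ∈ t.1}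


lemma taut_id {A V : Type} (φ : Formula A V) : Tautology (Formula.imp φ φ) := by
  intro f hneg himp hfal
  rw [himp]
  cases f φ <;> rfl

lemma max_iZero (p : I01) : max iZero p = p := by
  apply max_eq_right
  show iZero ≤ p
  exact Subtype.mk_le_mk.mpr p.2.1

/-- for any coalitions C ⊆ D ⊆ A and any real p with 0 ≤ p ≤ 1:
(1) ⊢_L ([C]_p φ → [D]_p φ) for each formula φ ∈ Φ; and
(2) ⊢_{L⁺} ([C]_p φ → [D]_p φ) for each formula φ ∈ Φ⁺, provided C is nonempty. -/
theorem coalition_set_monotonicity (A V : Type) [Fintype A]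
    (C D : Set A) (hCD : C ⊆ D) (p : I01) :
    (∀ φ : Formula A V,
      LProof (Formula.imp (Formula.mod C p φ) (Formula.mod D p φ))) ∧
    (C.Nonempty → ∀ φ : Formula A V, Formula.InPlus φ →
      LPlusProof (Formula.imp (Formula.mod C p φ) (Formula.mod D p φ))) := by
  have hUnion : (D \ C) ∪ C = D := Set.diff_union_of_subset hCD
  have hDisj : (D \ C) ∩ C = ∅ := by
    ext a; simp [Set.mem_diff]
  constructor
  · intro φ
    have hcoop := LProof.coop (D \ C) C iZero p (φ := φ) (ψ := φ) hDisj
    rw [hUnion, max_iZero] at hcoop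
    exact hcoop.mp (LProof.nec _ (LProof.taut (taut_id φ)))
  · intro hC φ hφ
    by_cases hDC : (D \ C).Nonempty
    · have hcoop := LPlusProof.coop (D \ C) C iZero p φ φ hDC hC hDisj hφ hφ
      rw [hUnion, max_iZero] at hcoop
      exact hcoop.mp (LPlusProof.nec _ hDC
        (LPlusProof.taut (taut_id φ) (Formula.InPlus.imp hφ hφ)))
    · have hCD' : C = D := by
        rw [Set.not_nonempty_iff_eq_empty, Set.diff_eq_empty] at hDC
        exact Set.Subset.antisymm hCD hDC
      subst hCD'
      exact LPlusProof.taut (taut_id _) (Formula.InPlus.imp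
        (Formula.InPlus.mod p hC hφ) (Formula.InPlus.mod p hC hφ))
end

section
/- (Soundness of the Cooperation axiom.) For any non-failure state s ∈ F̄ of a stochastic game (S, F, D, P, π), any coalitions C₁, C₂ ⊆ A, any formulae φ, ψ ∈ Φ, and any real numbers p, q with 0 ≤ p, q ≤ 1: if s ⊩ [C₁]_p(φ → ψ), s ⊩ [C₂]_q φ, and C₁ ∩ C₂ = ∅, then s ⊩ [C₁∪C₂]_{max(p,q)} ψ. -/
/-- Soundness of the Cooperation axiom. -/
theorem cooperation_sound (A V : Type) [Fintype A] (G : Game A V)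
    (s : G.S) (hs : s ∉ G.F) (C₁ C₂ : Set A) (φ ψ : Formula A V) (p q : I01)
    (h1 : SatGen G.F G.P G.pi (Formula.mod C₁ p (Formula.imp φ ψ)) s)
    (h2 : SatGen G.F G.P G.pi (Formula.mod C₂ q φ) s)
    (hdisj : C₁ ∩ C₂ = ∅) :
    SatGen G.F G.P G.pi (Formula.mod (C₁ ∪ C₂) (max p q) ψ) s := by
  classical
  obtain ⟨δ₁, hδ₁⟩ := h1
  obtain ⟨δ₂, hδ₂⟩ := h2
  refine ⟨fun a => if h : a.1 ∈ C₁ then δ₁ ⟨a.1, h⟩ else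
    δ₂ ⟨a.1, a.2.resolve_left h⟩, ?_⟩
  intro δ' hδ'
  have hext1 : ∀ a : ↥C₁, δ' a.1 = δ₁ a := by
    intro a
    have := hδ' ⟨a.1, Or.inl a.2⟩
    simpa [a.2] using this
  have hext2 : ∀ a : ↥C₂, δ' a.1 = δ₂ a := by
    intro a
    have ha1 : a.1 ∉ C₁ := by
      intro h
      have : a.1 ∈ C₁ ∩ C₂ := ⟨h, a.2⟩
      simp [hdisj] at this
    have := hδ' ⟨a.1, Or.inr a.2⟩
    simpa [ha1] using this
  have h1' := hδ₁ δ' hext1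
  have h2' := hδ₂ δ' hext2
  constructor
  · have hmax : ((max p q : I01) : ℝ) ≤ max (p : ℝ) (q : ℝ) := by
      rcases le_total p q with h | h
      · simp [max_eq_right h, le_max_right]
      · simp [max_eq_left h, le_max_left]
    exact le_trans hmax (max_le h1'.1 h2'.1)
  · intro t ht hpt
    exact (h1'.2 t ht hpt) (h2'.2 t ht hpt)
end

section
/- (Soundness of the Unachievability of Falsehood axiom.) For any non-failure state s ∈ F̄ of a stochastic game (S, F, D, P, π), any coalition C ⊆ A, and any real number p with 0 < p ≤ 1: s ⊮ [C]_p ⊥. -/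
/-- Soundness of the Unachievability of Falsehood axiom. -/
theorem unachievability_of_falsehood_sound (A V : Type) [Fintype A]
    (G : Game A V) (s : G.S) (hs : s ∉ G.F) (C : Set A) (p : I01)
    (hp : (0 : ℝ) < (p : ℝ)) :
    ¬ SatGen G.F G.P G.pi (Formula.mod C p Formula.falsum) s := by
  rintro ⟨δ, hδ⟩
  have hD := G.D_nonempty
  classical
  set δ' : A → G.D := fun a => if h : a ∈ C then δ ⟨a, h⟩ else Classical.choice hD with hδ'def
  have hext : ∀ a : ↥C, δ' a.1 = δ a := by
    rintro ⟨a, ha⟩; simp [δ', ha]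
  obtain ⟨h1, h2⟩ := hδ δ' hext
  have hzero : ∀ t : ↥(G.Fᶜ), G.P s δ' t.1 = 0 := by
    rintro ⟨t, ht⟩
    by_contra hne
    have hpos : 0 < G.P s δ' t := lt_of_le_of_ne (G.P_nonneg s δ' t) (Ne.symm hne)
    exact h2 t ht hpos
  rw [tsum_congr hzero, tsum_zero] at h1
  linarith
end

section
/- (Soundness theorem.) For the system L (and analogously for L⁺): if ⊢ φ, then s ⊩ φ for each non-failure state s ∈ F̄ of each stochastic game (S, F, D, P, π). -/
section Helpers

variable {A V S D : Type} {F : Set S} {P : S → (A → D) → S → ℝ} {π : V → Set S}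

lemma sat_taut {φ : Formula A V} (h : Tautology φ) (s : S) :
    SatGen F P π φ s := by
  classical
  have := h (fun ψ => if SatGen F P π ψ s then true else false) ?_ ?_ ?_
  · by_contra hc; simp [hc] at this
  · intro ψ; by_cases hψ : SatGen F P π ψ s <;> simp [SatGen, hψ]
  · intro ψ χ; by_cases hψ : SatGen F P π ψ s <;> by_cases hχ : SatGen F P π χ s <;>
      simp [SatGen, hψ, hχ]
  · simp [SatGen]

lemma sat_coop {C₁ C₂ : Set A} {p q : I01} {φ ψ : Formula A V}
    (hd : C₁ ∩ C₂ = ∅) {s : S}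
    (h1 : SatGen F P π (Formula.mod C₁ p (Formula.imp φ ψ)) s)
    (h2 : SatGen F P π (Formula.mod C₂ q φ) s) :
    SatGen F P π (Formula.mod (C₁ ∪ C₂) (max p q) ψ) s := by
  classical
  obtain ⟨δ₁, hδ₁⟩ := h1
  obtain ⟨δ₂, hδ₂⟩ := h2
  refine ⟨fun a => if h : a.1 ∈ C₁ then δ₁ ⟨a.1, h⟩
    else δ₂ ⟨a.1, a.2.resolve_left h⟩, ?_⟩
  intro δ' hext
  have hext1 : ∀ a : ↥C₁, δ' a.1 = δ₁ a := by
    rintro ⟨a, ha⟩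
    have := hext ⟨a, Or.inl ha⟩
    simpa [ha] using this
  have hext2 : ∀ a : ↥C₂, δ' a.1 = δ₂ a := by
    rintro ⟨a, ha⟩
    have hnot : a ∉ C₁ := by
      intro h1'
      have : a ∈ C₁ ∩ C₂ := ⟨h1', ha⟩
      simp [hd] at this
    have := hext ⟨a, Or.inr ha⟩
    simpa [hnot] using this
  obtain ⟨hp1, hq1⟩ := hδ₁ δ' hext1
  obtain ⟨hp2, hq2⟩ := hδ₂ δ' hext2
  constructor
  · rcases max_choice p q with h | h <;> rw [h]
    · exact hp1
    · exact hp2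
  · intro t ht hPt
    exact (hq1 t ht hPt) (hq2 t ht hPt)

lemma sat_mono {C : Set A} {p q : I01} {φ : Formula A V} (hqp : q ≤ p) {s : S}
    (h : SatGen F P π (Formula.mod C p φ) s) :
    SatGen F P π (Formula.mod C q φ) s := by
  obtain ⟨δ, hδ⟩ := h
  refine ⟨δ, fun δ' hext => ?_⟩
  obtain ⟨h1, h2⟩ := hδ δ' hext
  exact ⟨le_trans hqp h1, h2⟩

lemma sat_unach [Nonempty D] {C : Set A} {p : I01} (hp : (0 : ℝ) < (p : ℝ))
    (hP : ∀ s δ s', 0 ≤ P s δ s') {s : S} :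
    SatGen F P π (Formula.neg (Formula.mod C p Formula.falsum)) s := by
  classical
  intro h
  obtain ⟨δ, hδ⟩ := h
  set δ' : A → D := fun a => if h : a ∈ C then δ ⟨a, h⟩ else Classical.arbitrary D
  have hext : ∀ a : ↥C, δ' a.1 = δ a := by
    rintro ⟨a, ha⟩; simp [δ', ha]
  obtain ⟨h1, h2⟩ := hδ δ' hext
  have hz : (fun t : ↥(Fᶜ) => P s δ' t.1) = fun _ => 0 := by
    funext t
    by_contra hne
    have hpos : 0 < P s δ' t.1 := lt_of_le_of_ne (hP s δ' t.1) (Ne.symm hne)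
    exact h2 t.1 t.2 hpos
  rw [hz, tsum_zero] at h1
  linarith

lemma sat_nec [Nonempty D] {C : Set A} {φ : Formula A V}
    (hP : ∀ s δ s', 0 ≤ P s δ s')
    (hφ : ∀ t : S, t ∉ F → SatGen F P π φ t) {s : S} :
    SatGen F P π (Formula.mod C iZero φ) s := by
  refine ⟨fun _ => Classical.arbitrary D, fun δ' _ => ⟨?_, ?_⟩⟩
  · show ((iZero : I01) : ℝ) ≤ _
    simp only [iZero]
    exact tsum_nonneg fun t => hP s δ' t.1
  · intro t ht _
    exact hφ t ht

lemma sat_monoRule {C : Set A} {p : I01} {φ ψ : Formula A V}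
    (himp : ∀ t : S, t ∉ F → SatGen F P π (Formula.imp φ ψ) t) {s : S}
    (h : SatGen F P π (Formula.mod C p φ) s) :
    SatGen F P π (Formula.mod C p ψ) s := by
  obtain ⟨δ, hδ⟩ := h
  refine ⟨δ, fun δ' hext => ?_⟩
  obtain ⟨h1, h2⟩ := hδ δ' hext
  exact ⟨h1, fun t ht hPt => himp t ht (h2 t ht hPt)⟩

end Helpers

/-- Soundness theorem: for the system L (and analogously for L⁺),
if ⊢ φ, then s ⊩ φ for each non-failure state s of each stochastic game. -/
theorem soundness_theorem (A V : Type) [Fintype A] :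
    (∀ φ : Formula A V, LProof φ →
      ∀ (G : Game A V) (s : G.S), s ∉ G.F → SatGen G.F G.P G.pi φ s) ∧
    (∀ φ : Formula A V, LPlusProof φ →
      ∀ (G : Game A V) (s : G.S), s ∉ G.F → SatGen G.F G.P G.pi φ s) := by
  constructor
  · intro φ h
    induction h with
    | taut ht => intro G s hs; exact sat_taut ht s
    | coop C₁ C₂ p q φ ψ hd =>
        intro G s hs h1 h2
        exact sat_coop hd h1 h2
    | mono C p q φ hqp =>
        intro G s hs h
        exact sat_mono hqp h
    | unach C p hp =>
        intro G s hs
        have := G.D_nonempty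
        exact sat_unach hp G.P_nonneg
    | mp h1 h2 ih1 ih2 =>
        intro G s hs
        exact ih1 G s hs (ih2 G s hs)
    | nec C h ih =>
        intro G s hs
        have := G.D_nonempty
        exact sat_nec G.P_nonneg (fun t ht => ih G t ht)
  · intro φ h
    induction h with
    | taut ht _ => intro G s hs; exact sat_taut ht s
    | coop C₁ C₂ p q φ ψ _ _ hd _ _ =>
        intro G s hs h1 h2
        exact sat_coop hd h1 h2
    | mono C p q φ _ _ hqp =>
        intro G s hs h
        exact sat_mono hqp h
    | unach C p _ hp =>
        intro G s hs
        have := G.D_nonempty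
        exact sat_unach hp G.P_nonneg
    | mp h1 h2 ih1 ih2 =>
        intro G s hs
        exact ih1 G s hs (ih2 G s hs)
    | nec C _ h ih =>
        intro G s hs
        have := G.D_nonempty
        exact sat_nec G.P_nonneg (fun t ht => ih G t ht)
    | monoRule C p _ h ih =>
        intro G s hs hm
        exact sat_monoRule (fun t ht => ih G t ht) hm
end

section
/- In the canonical game G(Ψ,Σ): for each non-failure state s ∈ F̄ and each complete action profile δ ∈ D^A, if the set T(s,δ) is empty, then μ(s,δ) = 0. -/
/-
Let `Λ` be the set of formulae `φ` such that some `[C]_p φ ∈ s` has every agent of `C` playing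
`(φ, p)` under `δ`. The successors `T(s,δ)` are the maximal consistent sets containing `Λ`, so by
Lindenbaum's lemma `T(s,δ) = ∅` means that `Λ` is inconsistent: `⊢ φ* → ψ₁ → ⋯ → ψₙ → ⊥` for
distinct `φ*, ψᵢ ∈ Λ`. If some `[C*]_p φ* ∈ s` with `p > 0` contributed to `μ(s,δ)`, then
monotonicity gives `s ⊢ [C*]_p (ψ₁ → ⋯ → ⊥)`. The coalitions backing distinct formulae of `Λ`
are disjoint, because each agent plays a single formula, so Cooperation absorbs the `ψᵢ` one at a
time and yields `s ⊢ [U]_q ⊥` with `q ≥ p > 0`, contradicting Unachievability of Falsehood.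
-/

section Derivations

variable {A V : Type} {Pf : Formula A V → Prop}

theorem Deriv.mono {X Y : Set (Formula A V)} {φ : Formula A V} (h : Deriv Pf X φ)
    (hXY : X ⊆ Y) : Deriv Pf Y φ := by
  induction h with
  | thm h => exact .thm h
  | ax h => exact .ax (hXY h)
  | mp _ _ ih₁ ih₂ => exact .mp ih₁ ih₂

theorem Deriv.exists_finite {X : Set (Formula A V)} {φ : Formula A V} (h : Deriv Pf X φ) :
    ∃ X₀ ⊆ X, X₀.Finite ∧ Deriv Pf X₀ φ := by
  induction h with
  | thm h => exact ⟨∅, Set.empty_subset _, Set.finite_empty, .thm h⟩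
  | @ax φ h => exact ⟨{φ}, Set.singleton_subset_iff.mpr h, Set.finite_singleton φ, .ax rfl⟩
  | mp _ _ ih₁ ih₂ =>
    obtain ⟨X₁, hX₁, hfin₁, h₁⟩ := ih₁
    obtain ⟨X₂, hX₂, hfin₂, h₂⟩ := ih₂
    exact ⟨X₁ ∪ X₂, Set.union_subset hX₁ hX₂, hfin₁.union hfin₂,
      .mp (h₁.mono Set.subset_union_left) (h₂.mono Set.subset_union_right)⟩

theorem exists_maxConsistentIn_superset {Lang X : Set (Formula A V)} (hX : X ⊆ Lang)
    (hcons : Consistent Pf X) : ∃ M, MaxConsistentIn Pf Lang M ∧ X ⊆ M := by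
  have hchain : ∀ c ⊆ {Y | Y ⊆ Lang ∧ Consistent Pf Y}, IsChain (· ⊆ ·) c → c.Nonempty →
      ∃ ub ∈ {Y | Y ⊆ Lang ∧ Consistent Pf Y}, ∀ Y ∈ c, Y ⊆ ub := by
    intro c hc hchain hne
    refine ⟨⋃₀ c, ⟨Set.sUnion_subset fun Y hY => (hc hY).1, fun hbot => ?_⟩,
      fun Y hY => Set.subset_sUnion_of_mem hY⟩
    obtain ⟨X₀, hX₀, hfin, hbot₀⟩ := hbot.exists_finite
    obtain ⟨Y, hY, hX₀Y⟩ :=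
      hchain.directedOn.exists_mem_subset_of_finite_of_subset_sUnion hne hfin hX₀
    exact (hc hY).2 (hbot₀.mono hX₀Y)
  obtain ⟨M, hXM, hmax⟩ := zorn_subset_nonempty _ hchain X ⟨hX, hcons⟩
  exact ⟨M, ⟨hmax.1.1, hmax.1.2, fun Y hY hYc hMY => hmax.eq_of_superset ⟨hY, hYc⟩ hMY⟩, hXM⟩

end Derivations

section Tautologies

variable {A V : Type}
open Formula

theorem tautology_imp_const (φ ψ : Formula A V) : Tautology (imp φ (imp ψ φ)) := by
  intro f _ himp _
  simp only [himp]
  cases f φ <;> cases f ψ <;> rfl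

theorem tautology_imp_distrib (φ ψ χ : Formula A V) :
    Tautology (imp (imp φ (imp ψ χ)) (imp (imp φ ψ) (imp φ χ))) := by
  intro f _ himp _
  simp only [himp]
  cases f φ <;> cases f ψ <;> cases f χ <;> rfl

theorem tautology_imp_self (φ : Formula A V) : Tautology (imp φ φ) := by
  intro f _ himp _
  simp only [himp]
  cases f φ <;> rfl

theorem tautology_neg_imp_falsum (φ : Formula A V) :
    Tautology (imp (neg φ) (imp φ falsum)) := by
  intro f hneg himp hbot
  simp only [himp, hneg, hbot]
  cases f φ <;> rfl

end Tautologies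

open Formula in
/-- `Lang` is the language of the system `Pf` and `Coal` the coalitions allowed in its
modalities. -/
structure IsCoalitionLogic {A V : Type} (Pf : Formula A V → Prop) (Lang : Set (Formula A V))
    (Coal : Set (Set A)) : Prop where
  falsum_mem : falsum ∈ Lang
  imp_mem_iff {φ ψ : Formula A V} : imp φ ψ ∈ Lang ↔ φ ∈ Lang ∧ ψ ∈ Lang
  mem_of_mod_mem {C : Set A} {p : I01} {φ : Formula A V} : mod C p φ ∈ Lang → C ∈ Coal ∧ φ ∈ Lang
  union_mem {C₁ C₂ : Set A} : C₁ ∈ Coal → C₂ ∈ Coal → C₁ ∪ C₂ ∈ Coal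
  mem_of_pf {φ : Formula A V} : Pf φ → φ ∈ Lang
  taut {φ : Formula A V} : Tautology φ → φ ∈ Lang → Pf φ
  mp {φ ψ : Formula A V} : Pf (imp φ ψ) → Pf φ → Pf ψ
  coop {C₁ C₂ : Set A} {p q : I01} {φ ψ : Formula A V} : C₁ ∩ C₂ = ∅ → C₁ ∈ Coal → C₂ ∈ Coal →
    φ ∈ Lang → ψ ∈ Lang →
    Pf (imp (mod C₁ p (imp φ ψ)) (imp (mod C₂ q φ) (mod (C₁ ∪ C₂) (max p q) ψ)))
  unach {C : Set A} {p : I01} : C ∈ Coal → (0 : ℝ) < p → Pf (neg (mod C p falsum))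
  monoRule {C : Set A} {p : I01} {φ ψ : Formula A V} : C ∈ Coal → Pf (imp φ ψ) →
    Pf (imp (mod C p φ) (mod C p ψ))

namespace IsCoalitionLogic

variable {A V : Type} {Pf : Formula A V → Prop} {Lang : Set (Formula A V)} {Coal : Set (Set A)}
  (hL : IsCoalitionLogic Pf Lang Coal)
include hL
open Formula

theorem mem_of_deriv {X : Set (Formula A V)} (hX : X ⊆ Lang) {φ : Formula A V}
    (h : Deriv Pf X φ) : φ ∈ Lang := by
  induction h with
  | thm h => exact hL.mem_of_pf h
  | ax h => exact hX h
  | mp _ _ ih _ => exact (hL.imp_mem_iff.mp ih).2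

theorem pf_of_deriv_empty {φ : Formula A V} (h : Deriv Pf ∅ φ) : Pf φ := by
  induction h with
  | thm h => exact h
  | ax h => exact absurd h (Set.notMem_empty _)
  | mp _ _ ih₁ ih₂ => exact hL.mp ih₁ ih₂

theorem deriv_imp_of_deriv_insert {X : Set (Formula A V)} (hX : X ⊆ Lang) {φ ψ : Formula A V}
    (hφ : φ ∈ Lang) (h : Deriv Pf (insert φ X) ψ) : Deriv Pf X (imp φ ψ) := by
  have hXφ : insert φ X ⊆ Lang := Set.insert_subset hφ hX
  have weaken : ∀ χ, Deriv Pf X χ → χ ∈ Lang → Deriv Pf X (imp φ χ) := fun χ hχ hχL =>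
    .mp (.thm (hL.taut (tautology_imp_const χ φ) (by simp [hL.imp_mem_iff, hχL, hφ]))) hχ
  induction h with
  | thm h => exact weaken _ (.thm h) (hL.mem_of_pf h)
  | @ax χ h =>
    rcases Set.mem_insert_iff.mp h with rfl | h
    · exact .thm (hL.taut (tautology_imp_self χ) (by simp [hL.imp_mem_iff, hφ]))
    · exact weaken _ (.ax h) (hX h)
  | @mp χ₁ χ₂ h₁ h₂ ih₁ ih₂ =>
    have hχ₁ : χ₁ ∈ Lang := hL.mem_of_deriv hXφ h₂
    have hχ₂ : χ₂ ∈ Lang := (hL.imp_mem_iff.mp (hL.mem_of_deriv hXφ h₁)).2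
    have hdistrib := hL.taut (tautology_imp_distrib φ χ₁ χ₂)
      (by simp [hL.imp_mem_iff, hφ, hχ₁, hχ₂])
    exact .mp (.mp (.thm hdistrib) ih₁) ih₂

theorem deriv_foldr_imp_of_deriv_union {X : Set (Formula A V)} (hX : X ⊆ Lang)
    {l : List (Formula A V)} (hl : ∀ ψ ∈ l, ψ ∈ Lang) {χ : Formula A V}
    (h : Deriv Pf (X ∪ {ψ | ψ ∈ l}) χ) : Deriv Pf X (l.foldr imp χ) := by
  induction l generalizing X with
  | nil => simpa using h
  | cons ψ l ih =>
    have hψ : ψ ∈ Lang := hl ψ List.mem_cons_self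
    refine hL.deriv_imp_of_deriv_insert hX hψ
      (ih (Set.insert_subset hψ hX) (fun φ hφ => hl φ (List.mem_cons_of_mem ψ hφ)) ?_)
    refine h.mono fun φ hφ => ?_
    simp only [Set.mem_union, Set.mem_insert_iff, Set.mem_ofPred_eq, List.mem_cons] at hφ ⊢
    tauto

theorem exists_pf_imp_foldr_of_not_consistent {Λ : Set (Formula A V)} (hΛ : Λ ⊆ Lang)
    (hinc : ¬ Consistent Pf Λ) {φ : Formula A V} (hφ : φ ∈ Λ) :
    ∃ l : List (Formula A V), l.Nodup ∧ φ ∉ l ∧ (∀ ψ ∈ l, ψ ∈ Λ) ∧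
      Pf (imp φ (l.foldr imp falsum)) := by
  classical
  obtain ⟨Λ₀, hΛ₀, hfin, hbot⟩ := (not_not.mp hinc).exists_finite
  set l := (hfin.toFinset.erase φ).toList
  have hlΛ : ∀ ψ ∈ l, ψ ∈ Λ := fun ψ hψ =>
    hΛ₀ (hfin.mem_toFinset.mp (Finset.mem_of_mem_erase (Finset.mem_toList.mp hψ)))
  refine ⟨l, Finset.nodup_toList _, by simp [l], hlΛ, hL.pf_of_deriv_empty
    (hL.deriv_foldr_imp_of_deriv_union (l := φ :: l) (Set.empty_subset _) ?_ (hbot.mono ?_))⟩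
  · rintro ψ (_ | ⟨_, hψ⟩)
    exacts [hΛ hφ, hΛ (hlΛ ψ hψ)]
  · intro ψ hψ
    by_cases hψφ : ψ = φ <;> simp [l, hψφ, hψ]

/-- Each agent plays a single formula under `f`, so the coalitions backing the distinct formulae
of `l` are pairwise disjoint and disjoint from `U`; Cooperation then absorbs them one at a time. -/
theorem exists_deriv_mod_of_deriv_mod_foldr {X : Set (Formula A V)} (hX : X ⊆ Lang)
    (f : A → Formula A V) {χ : Formula A V} {l : List (Formula A V)} (hl : l.Nodup)
    (hback : ∀ ψ ∈ l, ∃ (C : Set A) (p : I01), mod C p ψ ∈ X ∧ ∀ a ∈ C, f a = ψ)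
    {U : Set A} {q : I01} (hU : U ∈ Coal) (hUl : ∀ a ∈ U, f a ∉ l)
    (h : Deriv Pf X (mod U q (l.foldr imp χ))) :
    ∃ U' ∈ Coal, ∃ q' : I01, q ≤ q' ∧ Deriv Pf X (mod U' q' χ) := by
  induction l generalizing U q with
  | nil => exact ⟨U, hU, q, le_rfl, h⟩
  | cons ψ l ih =>
    obtain ⟨C, p, hCX, hCψ⟩ := hback ψ List.mem_cons_self
    have hC : C ∈ Coal := (hL.mem_of_mod_mem (hX hCX)).1
    obtain ⟨-, hψl⟩ := hL.mem_of_mod_mem (hL.mem_of_deriv hX h)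
    obtain ⟨hψ, hlχ⟩ := hL.imp_mem_iff.mp hψl
    have hdisj : U ∩ C = ∅ := Set.eq_empty_of_forall_notMem fun a ⟨haU, haC⟩ =>
      hUl a haU (hCψ a haC ▸ List.mem_cons_self)
    have hstep : Deriv Pf X (mod (U ∪ C) (max q p) (l.foldr imp χ)) :=
      .mp (.mp (.thm (hL.coop hdisj hU hC hψ hlχ)) h) (.ax hCX)
    have hUCl : ∀ a ∈ U ∪ C, f a ∉ l := by
      rintro a (haU | haC)
      · exact fun ha => hUl a haU (List.mem_cons_of_mem ψ ha)
      · exact hCψ a haC ▸ (List.nodup_cons.mp hl).1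
    obtain ⟨U', hU', q', hqq', h'⟩ := ih (List.nodup_cons.mp hl).2
      (fun φ hφ => hback φ (List.mem_cons_of_mem ψ hφ)) (hL.union_mem hU hC) hUCl hstep
    exact ⟨U', hU', q', le_max_left q p |>.trans hqq', h'⟩

theorem not_consistent_of_deriv_mod_falsum {X : Set (Formula A V)} (hX : X ⊆ Lang) {C : Set A}
    {p : I01} (hC : C ∈ Coal) (hp : (0 : ℝ) < p) (h : Deriv Pf X (mod C p falsum)) :
    ¬ Consistent Pf X := by
  have hmod : mod C p falsum ∈ Lang := hL.mem_of_deriv hX h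
  have hnegmod : neg (mod C p falsum) ∈ Lang := hL.mem_of_pf (hL.unach hC hp)
  have hnegE := hL.taut (tautology_neg_imp_falsum (mod C p falsum))
    (by simp [hL.imp_mem_iff, hmod, hnegmod, hL.falsum_mem])
  exact not_not.mpr (.mp (.mp (.thm hnegE) (.thm (hL.unach hC hp))) h)

end IsCoalitionLogic

section Instances

variable {A V : Type}
open Formula

theorem LProof.monoRule {C : Set A} {p : I01} {φ ψ : Formula A V} (h : LProof (imp φ ψ)) :
    LProof (imp (mod C p φ) (mod C p ψ)) := by
  have hcoop := LProof.mp (.coop ∅ C iZero p φ ψ (Set.empty_inter C)) (.nec ∅ h)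
  rwa [Set.empty_union, max_eq_right (show iZero ≤ p from p.2.1)] at hcoop

theorem isCoalitionLogic_LProof :
    IsCoalitionLogic (@LProof A V) Set.univ Set.univ where
  falsum_mem := trivial
  imp_mem_iff := by simp
  mem_of_mod_mem _ := ⟨trivial, trivial⟩
  union_mem _ _ := trivial
  mem_of_pf _ := trivial
  taut h _ := .taut h
  mp := .mp
  coop h _ _ _ _ := .coop _ _ _ _ _ _ h
  unach _ hp := .unach _ _ hp
  monoRule _ h := LProof.monoRule h

theorem Formula.inPlus_imp_iff {φ ψ : Formula A V} : InPlus (imp φ ψ) ↔ InPlus φ ∧ InPlus ψ :=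
  ⟨fun | .imp hφ hψ => ⟨hφ, hψ⟩, fun ⟨hφ, hψ⟩ => .imp hφ hψ⟩

theorem Formula.InPlus.of_mod {C : Set A} {p : I01} {φ : Formula A V} :
    InPlus (Formula.mod C p φ) → C.Nonempty ∧ InPlus φ
  | .mod _ hC hφ => ⟨hC, hφ⟩

theorem LPlusProof.inPlus {φ : Formula A V} (h : LPlusProof φ) : InPlus φ := by
  induction h with
  | taut _ h => exact h
  | coop C₁ C₂ p q φ ψ hC₁ hC₂ _ hφ hψ =>
    exact .imp (.mod _ hC₁ (.imp hφ hψ))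
      (.imp (.mod _ hC₂ hφ) (.mod _ (hC₁.mono Set.subset_union_left) hψ))
  | mono C p q φ hC hφ _ => exact .imp (.mod _ hC hφ) (.mod _ hC hφ)
  | unach C p hC _ => exact .neg (.mod _ hC .falsum)
  | mp _ _ ih _ => exact (inPlus_imp_iff.mp ih).2
  | nec C hC _ ih => exact .mod _ hC ih
  | monoRule C p hC _ ih =>
    exact .imp (.mod _ hC (inPlus_imp_iff.mp ih).1) (.mod _ hC (inPlus_imp_iff.mp ih).2)

theorem isCoalitionLogic_LPlusProof :
    IsCoalitionLogic (@LPlusProof A V) {φ | InPlus φ} {C | C.Nonempty} where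
  falsum_mem := .falsum
  imp_mem_iff := inPlus_imp_iff
  mem_of_mod_mem := InPlus.of_mod
  union_mem hC₁ _ := hC₁.mono Set.subset_union_left
  mem_of_pf := LPlusProof.inPlus
  taut := .taut
  mp := .mp
  coop h hC₁ hC₂ hφ hψ := .coop _ _ _ _ _ _ hC₁ hC₂ h hφ hψ
  unach hC hp := .unach _ _ hC hp
  monoRule hC h := .monoRule _ _ hC h

end Instances

section CanonicalGame

variable {A V : Type} {Pf : Formula A V → Prop} {Sgm : Set (Formula A V)}
  {s : CanState Pf Sgm} {δ : A → CanD Sgm}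

def demands (s : CanState Pf Sgm) (δ : A → CanD Sgm) : Set (Formula A V) :=
  {φ | ∃ (C : Set A) (p : I01), Formula.mod C p φ ∈ s.1 ∧
    ∀ a ∈ C, (δ a).1.1 = φ ∧ (δ a).2 = (p : ℝ)}

theorem demands_subset (hsub : SubfClosed Sgm) : demands s δ ⊆ Sgm := by
  rintro φ ⟨C, p, hmod, -⟩
  exact hsub.2.2 C p φ (s.2.1 hmod)

theorem not_consistent_demands_of_TCan_eq_empty (hsub : SubfClosed Sgm)
    (hT : TCan Pf Sgm s δ = ∅) : ¬ Consistent Pf (demands s δ) := by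
  intro hcons
  obtain ⟨M, hM, hdM⟩ := exists_maxConsistentIn_superset (demands_subset hsub) hcons
  exact Set.eq_empty_iff_forall_notMem.mp hT ⟨M, hM⟩ fun φ hφ => hdM hφ

theorem muCan_eq_zero_of_forall_muSet_nonpos (h : ∀ r ∈ muSet Pf Sgm s δ, r ≤ 0) :
    muCan Pf Sgm s δ = 0 :=
  IsGreatest.csSup_eq ⟨Set.mem_insert 0 _, by rintro r (rfl | hr); exacts [le_rfl, h r hr]⟩

variable {Lang : Set (Formula A V)} {Coal : Set (Set A)}

theorem IsCoalitionLogic.forall_muSet_nonpos (hL : IsCoalitionLogic Pf Lang Coal)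
    (hSgm : Sgm ⊆ Lang) (hsub : SubfClosed Sgm) (hinc : ¬ Consistent Pf (demands s δ)) :
    ∀ r ∈ muSet Pf Sgm s δ, r ≤ 0 := by
  rintro r ⟨C, p, φ, rfl, hmod, hback⟩
  by_contra! hp
  have hs : s.1 ⊆ Lang := s.2.1.trans hSgm
  obtain ⟨l, hnodup, hφl, hl, hpf⟩ := hL.exists_pf_imp_foldr_of_not_consistent
    ((demands_subset hsub).trans hSgm) hinc ⟨C, p, hmod, hback⟩
  have hC : C ∈ Coal := (hL.mem_of_mod_mem (hs hmod)).1
  have hstart : Deriv Pf s.1 (Formula.mod C p (l.foldr Formula.imp Formula.falsum)) :=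
    .mp (.thm (hL.monoRule hC hpf)) (.ax hmod)
  have hbacked : ∀ ψ ∈ l, ∃ (C' : Set A) (p' : I01),
      Formula.mod C' p' ψ ∈ s.1 ∧ ∀ a ∈ C', (δ a).1.1 = ψ := by
    intro ψ hψ
    obtain ⟨C', p', hmod', hback'⟩ := hl ψ hψ
    exact ⟨C', p', hmod', fun a ha => (hback' a ha).1⟩
  obtain ⟨U, hU, q, hpq, hbot⟩ := hL.exists_deriv_mod_of_deriv_mod_foldr hs (fun a => (δ a).1.1)
    hnodup hbacked hC (fun a ha => (hback a ha).1 ▸ hφl) hstart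
  exact hL.not_consistent_of_deriv_mod_falsum hs hU (hp.trans_le hpq) hbot s.2.2.1

theorem IsCoalitionLogic.muCan_eq_zero_of_TCan_eq_empty (hL : IsCoalitionLogic Pf Lang Coal)
    (hSgm : Sgm ⊆ Lang) (hsub : SubfClosed Sgm) (hT : TCan Pf Sgm s δ = ∅) :
    muCan Pf Sgm s δ = 0 :=
  muCan_eq_zero_of_forall_muSet_nonpos
    (hL.forall_muSet_nonpos hSgm hsub (not_consistent_demands_of_TCan_eq_empty hsub hT))

end CanonicalGame

theorem canonical_mu_eq_zero_general (A V : Type) (Pf : Formula A V → Prop) (Sgm : Set (Formula A V))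
    (hsub : SubfClosed Sgm)
    (hcase : (Pf = @LProof A V ∧ Sgm.Finite) ∨
      (Pf = @LPlusProof A V ∧ ∀ χ ∈ Sgm, Formula.InPlus χ))
    (s : CanState Pf Sgm) (δ : A → CanD Sgm)
    (hT : TCan Pf Sgm s δ = ∅) :
    muCan Pf Sgm s δ = 0 := by
  rcases hcase with ⟨rfl, -⟩ | ⟨rfl, hplus⟩
  · exact isCoalitionLogic_LProof.muCan_eq_zero_of_TCan_eq_empty (Set.subset_univ Sgm) hsub hT
  · exact isCoalitionLogic_LPlusProof.muCan_eq_zero_of_TCan_eq_empty hplus hsub hT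

/-- in the canonical game G(Ψ,Σ), for each non-failure state s
and each complete action profile δ, if T(s,δ) is empty, then μ(s,δ) = 0. -/
theorem canonical_mu_eq_zero (A V : Type) [Fintype A] (Pf : Formula A V → Prop) (Sgm : Set (Formula A V))
    (hsub : SubfClosed Sgm) (hneg : NegClosed Sgm)
    (hcase : (Pf = @LProof A V ∧ Sgm.Finite) ∨
      (Pf = @LPlusProof A V ∧ ∀ χ ∈ Sgm, Formula.InPlus χ))
    (s : CanState Pf Sgm) (δ : A → CanD Sgm)
    (hT : TCan Pf Sgm s δ = ∅) :
    muCan Pf Sgm s δ = 0 :=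
  canonical_mu_eq_zero_general A V Pf Sgm hsub hcase s δ hT
end

section
/- In the canonical game G(Ψ,Σ): for any non-failure state s ∈ F̄ and any formula [C]_p φ ∈ s, there is an action profile δ ∈ D^C such that for any complete action profile δ' ∈ D^A extending δ and any state s' ∈ F̄, if P(s,δ',s') > 0, then φ ∈ s'. -/
/-- in the canonical game G(Ψ,Σ), for any non-failure state s and
any formula [C]_p φ ∈ s, there is an action profile δ ∈ D^C such that for any
complete action profile δ' extending δ and any non-failure state s',
if P(s,δ',s') > 0 then φ ∈ s'. -/
theorem canonical_strategy_exists (A V : Type) [Fintype A] (Pf : Formula A V → Prop) (Sgm : Set (Formula A V))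
    (hsub : SubfClosed Sgm) (hneg : NegClosed Sgm)
    (hcase : (Pf = @LProof A V ∧ Sgm.Finite) ∨
      (Pf = @LPlusProof A V ∧ ∀ χ ∈ Sgm, Formula.InPlus χ))
    (s : CanState Pf Sgm) (C : Set A) (p : I01) (φ : Formula A V)
    (hmem : Formula.mod C p φ ∈ s.1) :
    ∃ δ : ↥C → CanD Sgm, ∀ δ' : A → CanD Sgm, (∀ a : ↥C, δ' a.1 = δ a) →
      ∀ s' : CanState Pf Sgm, 0 < PCan Pf Sgm (some s) δ' (some s') → φ ∈ s'.1 := by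
  have hphiS : φ ∈ Sgm := hsub.2.2 C p φ (s.2.1 hmem)
  refine ⟨fun _ => (⟨φ, hphiS⟩, (p : ℝ)), fun δ' hδ' s' hP => ?_⟩
  by_cases hT : s' ∈ TCan Pf Sgm s δ'
  · exact hT φ ⟨C, p, hmem, fun a ha => by
      have := hδ' ⟨a, ha⟩
      simp only [this]
      trivial⟩
  · simp only [PCan, hT, if_neg hT] at hP
    exact absurd hP (lt_irrefl 0)
end

section
/- The set X = { [∅]_{1−10^{-n}} ⊤ | n ≥ 0 } semantically entails [∅]_1 ⊤: for any non-failure state s ∈ F̄ of any stochastic game, if s ⊩ [∅]_{1−10^{-n}} ⊤ for every natural number n ≥ 0, then s ⊩ [∅]_1 ⊤. -/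
/-- the set X = { [∅]_{1−10⁻ⁿ} ⊤ | n ≥ 0 } semantically entails
[∅]_1 ⊤: for any non-failure state s of any stochastic game, if
s ⊩ [∅]_{1−10⁻ⁿ} ⊤ for every natural number n, then s ⊩ [∅]_1 ⊤. -/
theorem empty_coalition_entailment (A V : Type) [Fintype A]
    (G : Game A V) (s : G.S) (hs : s ∉ G.F)
    (h : ∀ n : ℕ, SatGen G.F G.P G.pi
      (Formula.mod (∅ : Set A) (oneMinusTenPow n) Formula.top) s) :
    SatGen G.F G.P G.pi (Formula.mod (∅ : Set A) iOne Formula.top) s := by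
  have hD := G.D_nonempty
  refine ⟨fun a => absurd a.2 (Set.notMem_empty a.1), fun δ' _ => ?_⟩
  constructor
  · show (iOne : ℝ) ≤ _
    have key : ∀ n : ℕ, 1 - (1/10:ℝ)^n ≤ ∑' t : ↥(G.Fᶜ), G.P s δ' t.1 := by
      intro n
      obtain ⟨δ, hδ⟩ := h n
      exact (hδ δ' (fun a => absurd a.2 (Set.notMem_empty a.1))).1
    simp only [iOne]
    refine le_of_forall_pos_le_add fun ε hε => ?_
    obtain ⟨n, hn⟩ := exists_pow_lt_of_lt_one hε (show (1/10:ℝ) < 1 by norm_num)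
    have := key n
    linarith
  · intro t _ _
    show ¬ False
    exact not_false
end

section
/- (Incompleteness theorem.) Let ⊢ be any derivability relation between sets of formulae of Φ and formulae of Φ that is finitary, i.e., whenever X ⊢ φ there is a finite subset X₀ ⊆ X with X₀ ⊢ φ. If ⊢ is strongly sound with respect to stochastic games (X ⊢ φ implies X ⊨ φ for all X and φ), then ⊢ is not strongly complete (there exist a set X of formulae and a formula φ with X ⊨ φ but X ⊬ φ). In particular, X = { [∅]_{1−10^{-n}} ⊤ | n ≥ 0 } semantically entails [∅]_1 ⊤, yet no finite subset of X semantically entails [∅]_1 ⊤. -/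
/-- Incompleteness theorem: any finitary derivability relation on
the language Φ that is strongly sound with respect to stochastic games is not
strongly complete.  In particular, X = { [∅]_{1−10⁻ⁿ} ⊤ | n ≥ 0 } semantically
entails [∅]_1 ⊤, yet no finite subset of X semantically entails [∅]_1 ⊤. -/
theorem incompleteness_theorem (A V : Type) [Fintype A]
    (Tur : Set (Formula A V) → Formula A V → Prop)
    (hfinitary : ∀ X φ, Tur X φ → ∃ X₀, X₀ ⊆ X ∧ X₀.Finite ∧ Tur X₀ φ)
    (hsound : ∀ X φ, Tur X φ → Entails X φ) :
    (∃ (X : Set (Formula A V)) (φ : Formula A V), Entails X φ ∧ ¬ Tur X φ) ∧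
    Entails {χ : Formula A V | ∃ n : ℕ,
        χ = Formula.mod (∅ : Set A) (oneMinusTenPow n) Formula.top}
      (Formula.mod (∅ : Set A) iOne Formula.top) ∧
    (∀ X₀ ⊆ {χ : Formula A V | ∃ n : ℕ,
        χ = Formula.mod (∅ : Set A) (oneMinusTenPow n) Formula.top},
      X₀.Finite →
        ¬ Entails X₀ (Formula.mod (∅ : Set A) iOne Formula.top)) := by
  
  classical
  set Xset : Set (Formula A V) := {χ : Formula A V | ∃ n : ℕ,
      χ = Formula.mod (∅ : Set A) (oneMinusTenPow n) Formula.top} with hXset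
  -- Part 2: semantic entailment
  have hent : Entails Xset (Formula.mod (∅ : Set A) iOne Formula.top) := by
    intro G s hs hprem
    refine ⟨fun a => absurd a.2 (Set.notMem_empty a.1), fun δ' _ => ?_⟩
    constructor
    · by_contra hlt
      push_neg at hlt
      have h1 : (iOne : ℝ) = 1 := rfl
      have hpos : 0 < 1 - ∑' t : ↥(G.Fᶜ), G.P s δ' t.1 := by
        rw [h1] at hlt; linarith
      obtain ⟨n, hn⟩ := exists_pow_lt_of_lt_one hpos (by norm_num : (1/10:ℝ) < 1)
      obtain ⟨δ, hδ⟩ := hprem _ ⟨n, rfl⟩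
      have h2 := (hδ δ' (fun a => absurd a.2 (Set.notMem_empty a.1))).1
      have h3 : ((oneMinusTenPow n : I01) : ℝ) = 1 - (1/10:ℝ)^n := rfl
      rw [h3] at h2
      linarith
    · intro t ht hpt
      simp [Formula.top, SatGen]
  -- Part 3: no finite subset entails
  have hfin3 : ∀ X₀ ⊆ Xset, X₀.Finite →
      ¬ Entails X₀ (Formula.mod (∅ : Set A) iOne Formula.top) := by
    intro X₀ hsub hfin hent0
    have hinj : Function.Injective
        (fun n : ℕ => Formula.mod (∅ : Set A) (oneMinusTenPow n) (Formula.top : Formula A V)) := by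
      intro a b hab
      have h1 : oneMinusTenPow a = oneMinusTenPow b := by
        injection hab
      have h2 : (1:ℝ) - (1/10:ℝ)^a = 1 - (1/10:ℝ)^b := congrArg Subtype.val h1
      have h3 : (1/10:ℝ)^a = (1/10:ℝ)^b := by linarith
      exact (pow_right_strictAnti₀ (by norm_num) (by norm_num)).injective h3
    have hTfin : {n : ℕ | Formula.mod (∅ : Set A) (oneMinusTenPow n)
        (Formula.top : Formula A V) ∈ X₀}.Finite :=
      hfin.preimage (hinj.injOn)
    obtain ⟨N, hN⟩ := hTfin.bddAbove
    set c : ℝ := 1 - (1/10:ℝ)^N with hc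
    have hpowpos : (0:ℝ) < (1/10:ℝ)^N := by positivity
    have hpowle : (1/10:ℝ)^N ≤ 1 := pow_le_one₀ (by norm_num) (by norm_num)
    let G : Game A V :=
      { S := Bool
        F := {true}
        D := Unit
        D_nonempty := ⟨()⟩
        P := fun s _ s' =>
          if s then (if s' then 1 else 0) else (if s' then (1/10:ℝ)^N else c)
        P_nonneg := by
          intro s δ s'
          split_ifs <;> (try rw [hc]) <;> linarith
        P_le_one := by
          intro s δ s'
          split_ifs <;> (try rw [hc]) <;> linarith
        P_sum := by
          intro s δ
          have h := hasSum_fintype (fun s' : Bool =>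
            if s then (if s' then (1:ℝ) else 0) else (if s' then (1/10:ℝ)^N else c))
          rw [Fintype.sum_bool] at h
          cases s <;> simpa [hc] using h
        pi := fun _ => ∅ }
    have hFc : ∀ (δ' : A → Unit) (s : Bool),
        ∑' t : ↥(G.Fᶜ), G.P s δ' t.1 = G.P s δ' false := by
      intro δ' s
      show ∑' t : ↥(({true} : Set Bool)ᶜ), G.P s δ' t.1 = _
      rw [tsum_subtype, tsum_fintype, Fintype.sum_bool]
      simp [Set.indicator]
    have hsF : (false : Bool) ∉ G.F := by simp [G]
    have hsat := hent0 G false hsF ?_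
    · obtain ⟨δ, hδ⟩ := hsat
      have h2 := (hδ (fun _ => ()) (fun a => absurd a.2 (Set.notMem_empty a.1))).1
      rw [hFc] at h2
      have h3 : (iOne : ℝ) = 1 := rfl
      have h4 : G.P false (fun _ => ()) false = c := by simp [G]
      rw [h3, h4] at h2
      rw [hc] at h2
      linarith
    · intro χ hχ
      obtain ⟨n, rfl⟩ := hsub hχ
      have hnN : n ≤ N := hN hχ
      refine ⟨fun a => absurd a.2 (Set.notMem_empty a.1), fun δ' _ => ?_⟩
      constructor
      · rw [hFc]
        have h4 : G.P false δ' false = c := by simp [G]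
        rw [h4, hc]
        have : (1/10:ℝ)^N ≤ (1/10:ℝ)^n :=
          pow_le_pow_of_le_one (by norm_num) (by norm_num) hnN
        show (1:ℝ) - (1/10:ℝ)^n ≤ 1 - (1/10:ℝ)^N
        linarith
      · intro t ht hpt
        simp [Formula.top, SatGen]
  refine ⟨⟨Xset, Formula.mod (∅ : Set A) iOne Formula.top, hent, ?_⟩, hent, hfin3⟩
  intro h
  obtain ⟨X₀, hsub, hf, hT⟩ := hfinitary _ _ h
  exact hfin3 X₀ hsub hf (hsound _ _ hT)
end
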